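/- Selective Rationalizability can be seen as Strong-Δ-Rationalizability with enlarged restrictions: if for each player i one sets Δ_i' = {μ_i ∈ Δ_i : μ_i strongly believes S_j^q for all j ≠ i and all q ∈ ℕ}, then the Strong-Δ'-Rationalizability procedure initialized at S_i and the Selective Rationalizability procedure for Δ produce the same sets from step 1 onward: S_{i,RΔ}^n equals the n-th step of Strong-Δ'-Rationalizability for all n ≥ 1. -/
import Mathlib


/-- An abstract finite dynamic game with perfect recall.  Players are a
finite set `I`; player `i` has a finite set `H i` of information sets, at
each of which the finite set `A i` of actions is available, so a strategy of
`i` is a function `H i → A i`.  `Belief i` is the (abstract) space of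
conditional beliefs of `i` at an information set, so a conditional
probability system (CPS) of `i` is a map `H i → Belief i` satisfying the
predicate `isCPS`.  `ρ` is the sequential-best-reply correspondence,
`SB i μ j X` says that the CPS `μ` of `i` strongly believes the set `X` of
strategies of opponent `j`, `reach i j h = S_j(h)` is the set of strategies
of `j` allowing `h ∈ H_i` to be reached, `le i h h'` says `h' ⪰ h` (`h'`
weakly follows `h` among `i`'s information sets), `pred i h = p(h)` is the
immediate predecessor of `h` among `i`'s information sets (if any), `Z` is
the set of terminal histories and `ζ` maps strategy profiles to induced
terminal histories. -/
structure DGame where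
  I : Type
  [fI : Fintype I]
  [dI : DecidableEq I]
  A : I → Type
  [fA : ∀ i, Fintype (A i)]
  [dA : ∀ i, DecidableEq (A i)]
  H : I → Type
  [fH : ∀ i, Fintype (H i)]
  [dH : ∀ i, DecidableEq (H i)]
  Belief : I → Type
  isCPS : ∀ i, (H i → Belief i) → Prop
  ρ : ∀ i, (H i → Belief i) → Set (H i → A i)
  SB : ∀ i, (H i → Belief i) → ∀ j, Set (H j → A j) → Prop
  reach : ∀ i j, H i → Set (H j → A j)
  le : ∀ i, H i → H i → Prop
  pred : ∀ i, H i → Option (H i)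
  Z : Type
  ζ : (∀ i, H i → A i) → Z

attribute [instance] DGame.fI DGame.dI DGame.fA DGame.dA DGame.fH DGame.dH

namespace DGame

variable (G : DGame)

/-- The strategies of player `i`. -/
abbrev Strat (i : G.I) : Type := G.H i → G.A i

/-- The CPSs (candidate conditional belief systems) of player `i`. -/
abbrev CPS (i : G.I) : Type := G.H i → G.Belief i

/-- The Rationalizability procedure. -/
def Rat : ℕ → ∀ i : G.I, Set (G.Strat i)
  | 0 => fun _ => Set.univ
  | n + 1 => fun i =>
      { s | ∃ μ : G.CPS i, G.isCPS i μ ∧ s ∈ G.ρ i μ ∧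
          ∀ j, j ≠ i → ∀ q, q < n + 1 → G.SB i μ j (Rat q j) }

/-- The rationalizable strategies of player `i`: `S_i^∞`. -/
def RatInf (i : G.I) : Set (G.Strat i) := ⋂ n : ℕ, G.Rat n i

/-- Selective Rationalizability for restrictions `Δ`:
`S_{i,RΔ}^0 = S_i^∞`; at step `n+1`, `s_i` survives iff there is
`μ_i ∈ Δ_i` (a CPS) with (S1) `s_i ∈ ρ(μ_i)`, (S2) `μ_i` strongly believes
`S_{j,RΔ}^q` for all `j ≠ i`, `q < n+1`, and (S3) `μ_i` strongly believes
`S_j^q` for all `j ≠ i` and all `q ∈ ℕ`. -/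
def SelRat (Δ : ∀ i : G.I, Set (G.CPS i)) : ℕ → ∀ i : G.I, Set (G.Strat i)
  | 0 => fun i => G.RatInf i
  | n + 1 => fun i =>
      { s | ∃ μ ∈ Δ i, G.isCPS i μ ∧ s ∈ G.ρ i μ ∧
          (∀ j, j ≠ i → ∀ q, q < n + 1 → G.SB i μ j (SelRat Δ q j)) ∧
          (∀ j, j ≠ i → ∀ q : ℕ, G.SB i μ j (G.Rat q j)) }

/-- The limit of Selective Rationalizability, `S_{i,RΔ}^∞`. -/
def SelRatInf (Δ : ∀ i : G.I, Set (G.CPS i)) (i : G.I) : Set (G.Strat i) :=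
  ⋂ n : ℕ, G.SelRat Δ n i

/-- The information sets of `i` reachable by a profile of strategy sets:
`h ∈ H_i(×_j X_j)` iff `X_j(h) = X_j ∩ S_j(h) ≠ ∅` for every `j`. -/
def HreachProf (X : ∀ j : G.I, Set (G.Strat j)) (i : G.I) : Set (G.H i) :=
  { h | ∀ j, (X j ∩ G.reach i j h).Nonempty }

/-- `H_i(S^∞)`: the information sets of `i` reachable by the rationalizable
strategy profiles. -/
def HreachInf (i : G.I) : Set (G.H i) := G.HreachProf G.RatInf i

/-- A restriction set `Δ_i` is rationalizable if whenever `μ_i ∈ Δ_i` and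
the CPS `μ_i*` agrees with `μ_i` at every information set in `H_i(S^∞)`,
then `μ_i* ∈ Δ_i`. -/
def RatRestriction (i : G.I) (Δi : Set (G.CPS i)) : Prop :=
  ∀ μ ∈ Δi, ∀ μstar : G.CPS i, G.isCPS i μstar →
    (∀ h ∈ G.HreachInf i, μstar h = μ h) → μstar ∈ Δi

end DGame

namespace DGame

variable (G : DGame)

/-- Strong-Δ-Rationalizability for restrictions `Δ'`: step 0 gives all
strategies; at step `n+1`, `s_i` survives iff `s_i ∈ ρ(μ_i)` for some CPS
`μ_i ∈ Δ_i'` that strongly believes the step-`q` surviving set of each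
opponent `j` for all `q < n+1`. -/
def SDR (Δ' : ∀ i : G.I, Set (G.CPS i)) : ℕ → ∀ i : G.I, Set (G.Strat i)
  | 0 => fun _ => Set.univ
  | n + 1 => fun i =>
      { s | ∃ μ ∈ Δ' i, G.isCPS i μ ∧ s ∈ G.ρ i μ ∧
          ∀ j, j ≠ i → ∀ q, q < n + 1 → G.SB i μ j (SDR Δ' q j) }

/-- The enlarged restrictions `Δ_i' = {μ_i ∈ Δ_i : μ_i` strongly believes
`S_j^q` for all `j ≠ i` and all `q ∈ ℕ}`. -/
def DeltaPrime (Δ : ∀ i : G.I, Set (G.CPS i)) (i : G.I) : Set (G.CPS i) :=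
  { μ ∈ Δ i | ∀ j, j ≠ i → ∀ q : ℕ, G.SB i μ j (G.Rat q j) }

end DGame

namespace DGame

variable (G : DGame)

lemma rat_succ_subset (n : ℕ) (i : G.I) : G.Rat (n + 1) i ⊆ G.Rat n i := by
  cases n with
  | zero =>
    intro s _
    simp only [Rat]
    exact Set.mem_univ s
  | succ m =>
    intro s hs
    simp only [Rat, Set.mem_setOf_eq] at hs ⊢
    obtain ⟨μ, h1, h2, h3⟩ := hs
    exact ⟨μ, h1, h2, fun j hj q hq => h3 j hj q (hq.trans (Nat.lt_succ_self _))⟩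

lemma rat_antitone (i : G.I) : Antitone (fun n => G.Rat n i) :=
  antitone_nat_of_succ_le (fun n => G.rat_succ_subset n i)

lemma exists_ratInf_eq (i : G.I) : ∃ N, G.RatInf i = G.Rat N i := by
  obtain ⟨k, ⟨N, hNk⟩, hmin⟩ :=
    wellFounded_lt.has_min (Set.range fun n => (G.Rat n i).ncard) ⟨_, ⟨0, rfl⟩⟩
  refine ⟨N, ?_⟩
  have hstab : ∀ n, N ≤ n → G.Rat n i = G.Rat N i := by
    intro n hn
    refine Set.eq_of_subset_of_ncard_le (G.rat_antitone i hn) ?_ (Set.toFinite _)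
    have h2 := hmin _ ⟨n, rfl⟩
    rw [← hNk] at h2
    simp only [not_lt] at h2
    exact h2
  apply Set.eq_of_subset_of_subset
  · exact Set.iInter_subset _ N
  · intro s hs
    refine Set.mem_iInter.2 fun n => ?_
    rcases le_or_gt N n with h | h
    · rw [hstab n h]; exact hs
    · exact G.rat_antitone i h.le hs

lemma selRat_succ_eq_sdr (Δ : ∀ i : G.I, Set (G.CPS i)) :
    ∀ n : ℕ, ∀ i : G.I, G.SelRat Δ (n + 1) i = G.SDR (G.DeltaPrime Δ) (n + 1) i := by
  intro n
  induction n using Nat.strong_induction_on with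
  | _ n IH =>
    intro i
    ext s
    simp only [SelRat, SDR, Set.mem_setOf_eq]
    constructor
    · rintro ⟨μ, hμ, hCPS, hρ, hSB1, hSB2⟩
      refine ⟨μ, ⟨hμ, hSB2⟩, hCPS, hρ, ?_⟩
      intro j hj q hq
      match q, hq with
      | 0, _ =>
        have h0 : G.SDR (G.DeltaPrime Δ) 0 j = G.Rat 0 j := by
          simp only [SDR, Rat]
        rw [h0]
        exact hSB2 j hj 0
      | (k + 1), hq =>
        rw [← IH k (Nat.lt_of_succ_lt_succ hq) j]
        exact hSB1 j hj (k + 1) hq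
    · rintro ⟨μ, ⟨hμ, hSB2⟩, hCPS, hρ, hSB1⟩
      refine ⟨μ, hμ, hCPS, hρ, ?_, hSB2⟩
      intro j hj q hq
      match q, hq with
      | 0, _ =>
        obtain ⟨N, hN⟩ := G.exists_ratInf_eq j
        have h0 : G.SelRat Δ 0 j = G.Rat N j := by
          simp only [SelRat]
          exact hN
        rw [h0]
        exact hSB2 j hj N
      | (k + 1), hq =>
        rw [show G.SelRat Δ (k + 1) j = G.SDR (G.DeltaPrime Δ) (k + 1) j from
          IH k (Nat.lt_of_succ_lt_succ hq) j]
        exact hSB1 j hj (k + 1) hq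

end DGame

/-- Selective Rationalizability can be seen as
Strong-Δ-Rationalizability with enlarged restrictions: if for each player
`i` one sets `Δ_i' = {μ_i ∈ Δ_i : μ_i` strongly believes `S_j^q` for all
`j ≠ i` and all `q ∈ ℕ}`, then the Strong-Δ'-Rationalizability procedure
initialized at `S_i` and the Selective Rationalizability procedure for `Δ`
produce the same sets from step 1 onward: `S_{i,RΔ}^n` equals the `n`-th
step of Strong-Δ'-Rationalizability for all `n ≥ 1`. -/
theorem selective_as_strong_delta (G : DGame)
    (Δ : ∀ i : G.I, Set (G.CPS i)) (i : G.I) (n : ℕ) (hn : 1 ≤ n) :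
    G.SelRat Δ n i = G.SDR (G.DeltaPrime Δ) n i := by
  obtain ⟨m, rfl⟩ := Nat.exists_eq_add_of_le hn
  rw [Nat.add_comm]
  exact G.selRat_succ_eq_sdr Δ m i
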